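/- Every orientation-preserving homeomorphism of the closed interval [0,1] can be written as a single commutator of two orientation-preserving homeomorphisms of [0,1]. -/

import Mathlib

open Set

/-- The point `0` of the unit interval `[0,1]`. -/
noncomputable def I0 : Icc (0:ℝ) 1 := ⟨0, by norm_num⟩

/-- The point `1` of the unit interval `[0,1]`. -/
noncomputable def I1 : Icc (0:ℝ) 1 := ⟨1, by norm_num⟩

/-- An orientation-preserving homeomorphism of `[0,1]` is a self-homeomorphism
fixing both endpoints. -/
def OrientationPreserving (h : Homeomorph (Icc (0:ℝ) 1) (Icc (0:ℝ) 1)) : Prop :=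
  h I0 = I0 ∧ h I1 = I1

/-!
Put `g x = x * h⁻¹ x`. Then `g` is an increasing homeomorphism of `[0,1]` lying strictly below
both the identity and `h⁻¹` on `(0,1)`, so `g` and `h ∘ g` both push every interior point
towards `0`. Transported to `ℝ` through `(0,1) ≃o ℝ`, two such automorphisms are conjugate:
a conjugacy is obtained by matching their fundamental domains `[a p, p)` and `[b q, q)` by an
increasing bijection and spreading it along the orbits. If `φ g φ⁻¹ = h g`, then
`h = φ g φ⁻¹ g⁻¹`.
-/

namespace OrderIso

variable {α β : Type*}

lemma coe_pow [LE α] (a : α ≃o α) (n : ℕ) : ⇑(a ^ n) = (⇑a)^[n] :=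
  hom_coe_pow _ rfl (fun _ _ => rfl) a n

lemma zpow_apply_zpow_apply [LE α] (a : α ≃o α) (m n : ℤ) (x : α) :
    (a ^ m) ((a ^ n) x) = (a ^ (m + n)) x := by
  rw [zpow_add]; rfl

lemma zpow_apply_apply [LE α] (a : α ≃o α) (m : ℤ) (x : α) :
    (a ^ m) (a x) = (a ^ (m + 1)) x := by
  rw [zpow_add_one]; rfl

lemma apply_zpow_apply [LE α] (a : α ≃o α) (m : ℤ) (x : α) :
    a ((a ^ m) x) = (a ^ (1 + m)) x := by
  rw [zpow_one_add]; rfl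

section Level

variable [LinearOrder α] {a b c : α ≃o α} {p : α}

def OrbitsUnboundedBelow (a : α ≃o α) : Prop := ∀ x y, ∃ n : ℕ, (a ^ n) x < y

namespace OrbitsUnboundedBelow

lemma apply_lt (ha : a.OrbitsUnboundedBelow) (x : α) : a x < x := by
  by_contra! hx
  have hle : ∀ n : ℕ, x ≤ (a ^ n) x := fun n => by
    induction n with
    | zero => rfl
    | succ n ih => rw [pow_succ, RelIso.mul_apply]; exact ih.trans ((a ^ n).monotone hx)
  obtain ⟨n, hn⟩ := ha x x
  exact (hle n).not_gt hn

lemma strictAnti_zpow_apply (ha : a.OrbitsUnboundedBelow) (x : α) :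
    StrictAnti fun n : ℤ => (a ^ n) x :=
  strictAnti_int_of_succ_lt fun n => by
    simpa only [zpow_add_one, RelIso.mul_apply] using (a ^ n).strictMono (ha.apply_lt x)

end OrbitsUnboundedBelow

/-- The index `n` of the translate `a ^ (-n) '' Ico (a p) p` of the fundamental domain that
contains `x`. -/
noncomputable def level (a : α ≃o α) (p x : α) : ℤ := sInf {n : ℤ | (a ^ n) x < p}

lemma level_eq_iff (ha : a.OrbitsUnboundedBelow) {x : α} {n : ℤ} :
    a.level p x = n ↔ (a ^ n) x ∈ Ico (a p) p := by
  have hanti := ha.strictAnti_zpow_apply x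
  have hne : {n : ℤ | (a ^ n) x < p}.Nonempty := by
    obtain ⟨m, hm⟩ := ha x p
    exact ⟨m, by simpa using hm⟩
  have hbdd : BddBelow {n : ℤ | (a ^ n) x < p} := by
    obtain ⟨m, hm⟩ := ha p x
    refine ⟨-m, fun k hk => ?_⟩
    by_contra! hkm
    have hp : p < (a ^ (-(m : ℤ))) x := by
      rw [zpow_neg, zpow_natCast]
      exact (a ^ m).lt_symm_apply.2 hm
    exact (hanti.antitone hkm.le |>.trans_lt hk |>.trans hp).false
  have hprev : a p ≤ (a ^ n) x ↔ ¬ (a ^ (n - 1)) x < p := by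
    rw [not_lt, sub_eq_neg_add, zpow_add, zpow_neg_one, RelIso.mul_apply]
    exact a.le_symm_apply.symm
  rw [mem_Ico, hprev]
  constructor
  · rintro rfl
    exact ⟨fun h => (csInf_le hbdd h).not_gt (sub_one_lt _), Int.csInf_mem hne hbdd⟩
  · rintro ⟨hn, hn'⟩
    refine le_antisymm (csInf_le hbdd hn') (le_csInf hne fun m hm => ?_)
    by_contra! hmn
    exact hn (hanti.antitone (Int.le_sub_one_of_lt hmn) |>.trans_lt hm)

lemma zpow_level_mem_Ico (ha : a.OrbitsUnboundedBelow) (p x : α) :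
    (a ^ a.level p x) x ∈ Ico (a p) p :=
  (level_eq_iff ha).1 rfl

lemma level_mono (ha : a.OrbitsUnboundedBelow) (p : α) : Monotone (a.level p) := by
  intro x y hxy
  by_contra! hlt
  have hx := (zpow_level_mem_Ico ha p x).1
  have hy := a.strictMono (zpow_level_mem_Ico ha p y).2
  rw [apply_zpow_apply] at hy
  have hxy' := (a ^ a.level p x).monotone hxy
  have hyy := (ha.strictAnti_zpow_apply y).antitone (show 1 + a.level p y ≤ a.level p x by omega)
  exact (hx.trans hxy' |>.trans hyy |>.trans_lt hy).false

lemma level_apply (ha : a.OrbitsUnboundedBelow) (p x : α) :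
    a.level p (a x) = a.level p x - 1 := by
  rw [level_eq_iff ha, zpow_apply_apply, sub_add_cancel]
  exact zpow_level_mem_Ico ha p x

noncomputable def conjugator (a b c : α ≃o α) (p x : α) : α :=
  (b ^ (-a.level p x)) (c ((a ^ a.level p x) x))

lemma level_conjugator (ha : a.OrbitsUnboundedBelow) (hb : b.OrbitsUnboundedBelow)
    (hc : c (a p) = b (c p)) (x : α) : b.level (c p) (conjugator a b c p x) = a.level p x := by
  rw [level_eq_iff hb, conjugator, zpow_apply_zpow_apply, add_neg_cancel, zpow_zero,
    RelIso.one_apply, ← hc, mem_Ico, c.le_iff_le, c.lt_iff_lt]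
  exact zpow_level_mem_Ico ha p x

lemma conjugator_conjugator (ha : a.OrbitsUnboundedBelow) (hb : b.OrbitsUnboundedBelow)
    (hc : c (a p) = b (c p)) (x : α) :
    conjugator b a c.symm (c p) (conjugator a b c p x) = x := by
  rw [conjugator, level_conjugator ha hb hc, conjugator, zpow_apply_zpow_apply, add_neg_cancel,
    zpow_zero, RelIso.one_apply, c.symm_apply_apply, zpow_apply_zpow_apply, neg_add_cancel,
    zpow_zero, RelIso.one_apply]

lemma monotone_conjugator (ha : a.OrbitsUnboundedBelow) (hb : b.OrbitsUnboundedBelow)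
    (hc : c (a p) = b (c p)) : Monotone (conjugator a b c p) := by
  intro x y hxy
  rcases (level_mono ha p hxy).eq_or_lt with heq | hlt
  · rw [conjugator, conjugator, heq]
    exact (b ^ _).monotone (c.monotone ((a ^ _).monotone hxy))
  · rw [← level_conjugator ha hb hc, ← level_conjugator ha hb hc] at hlt
    exact (lt_of_not_ge fun h => hlt.not_ge (level_mono hb _ h)).le

lemma conjugator_apply (ha : a.OrbitsUnboundedBelow) (x : α) :
    conjugator a b c p (a x) = b (conjugator a b c p x) := by
  rw [conjugator, conjugator, level_apply ha, zpow_apply_apply, sub_add_cancel, apply_zpow_apply,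
    neg_sub, sub_eq_neg_add, add_comm]

theorem isConj_of_orbitsUnboundedBelow (ha : a.OrbitsUnboundedBelow)
    (hb : b.OrbitsUnboundedBelow) (c : α ≃o α) (p : α) (hc : c (a p) = b (c p)) :
    IsConj a b := by
  have hc' : c.symm (b (c p)) = a (c.symm (c p)) := by rw [← hc]; simp
  let φ : α ≃o α := Equiv.toOrderIso
    { toFun := conjugator a b c p
      invFun := conjugator b a c.symm (c p)
      left_inv := conjugator_conjugator ha hb hc
      right_inv := fun x => by simpa using conjugator_conjugator hb ha hc' x }
    (monotone_conjugator ha hb hc) (monotone_conjugator hb ha hc')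
  refine isConj_iff.2 ⟨φ, OrderIso.ext <| funext fun x => ?_⟩
  change conjugator a b c p (a (φ.symm x)) = b x
  rw [conjugator_apply ha]
  exact congrArg b (φ.apply_symm_apply x)

end Level

lemma orbitsUnboundedBelow_of_apply_lt [ConditionallyCompleteLinearOrder α] [TopologicalSpace α]
    [OrderTopology α] {a : α ≃o α} (ha : ∀ x, a x < x) : a.OrbitsUnboundedBelow := by
  intro x y
  by_contra! hy
  simp only [coe_pow] at hy
  have hanti : Antitone fun n => a^[n] x :=
    antitone_nat_of_succ_le fun n => by rw [Function.iterate_succ_apply']; exact (ha _).le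
  have hlim := tendsto_atTop_ciInf hanti ⟨y, by rintro _ ⟨n, rfl⟩; exact hy n⟩
  exact (ha _).ne (isFixedPt_of_tendsto_iterate hlim a.continuous.continuousAt)

def autCongr [LE α] [LE β] (e : α ≃o β) : (α ≃o α) ≃* (β ≃o β) where
  toFun u := (e.symm.trans u).trans e
  invFun v := (e.trans v).trans e.symm
  left_inv u := by ext; simp
  right_inv v := by ext; simp
  map_mul' u v := by ext; simp [RelIso.mul_apply]

lemma autCongr_apply_lt [Preorder α] [Preorder β] (e : α ≃o β) {u : α ≃o α}
    (hu : ∀ x, u x < x) (y : β) : e.autCongr u y < y :=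
  calc e (u (e.symm y)) < e (e.symm y) := e.strictMono (hu _)
    _ = y := e.apply_symm_apply y

section Interior

variable [PartialOrder α] [BoundedOrder α]

lemma notMem_Ioo_bot_top {x : α} : x ∉ Ioo (⊥ : α) ⊤ ↔ x = ⊥ ∨ x = ⊤ := by
  rw [mem_Ioo, bot_lt_iff_ne_bot, lt_top_iff_ne_top, not_and_or, not_ne_iff, not_ne_iff]

open Classical in
lemma monotone_subtypeCongr_refl (φ : Ioo (⊥ : α) ⊤ ≃o Ioo (⊥ : α) ⊤) :
    Monotone (Equiv.Perm.subtypeCongr φ.toEquiv (Equiv.refl {x // x ∉ Ioo (⊥ : α) ⊤})) := by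
  intro x y hxy
  by_cases hx : x ∈ Ioo ⊥ ⊤
  · by_cases hy : y ∈ Ioo ⊥ ⊤
    · rw [Equiv.Perm.subtypeCongr.left_apply _ _ hx, Equiv.Perm.subtypeCongr.left_apply _ _ hy]
      exact φ.monotone (Subtype.mk_le_mk.2 hxy)
    · rw [Equiv.Perm.subtypeCongr.right_apply _ _ hy]
      rcases notMem_Ioo_bot_top.1 hy with rfl | rfl
      · exact absurd (hxy.trans_lt hx.1) (lt_irrefl _)
      · exact le_top
  · rcases notMem_Ioo_bot_top.1 hx with rfl | rfl
    · rw [Equiv.Perm.subtypeCongr.right_apply _ _ hx]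
      exact bot_le
    · rw [top_le_iff.1 hxy]

open Classical in
noncomputable def autIooBotTopEquiv : (α ≃o α) ≃* (Ioo (⊥ : α) ⊤ ≃o Ioo (⊥ : α) ⊤) where
  toFun u :=
    { toFun x := ⟨u x, by simpa using u.strictMono x.2.1, by simpa using u.strictMono x.2.2⟩
      invFun x := ⟨u.symm x, by simpa using u.symm.strictMono x.2.1,
        by simpa using u.symm.strictMono x.2.2⟩
      left_inv x := by simp
      right_inv x := by simp
      map_rel_iff' := u.le_iff_le }
  invFun φ := Equiv.toOrderIso (Equiv.Perm.subtypeCongr φ.toEquiv (Equiv.refl _))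
    (monotone_subtypeCongr_refl φ)
    (by rw [Equiv.Perm.subtypeCongr.symm]; exact monotone_subtypeCongr_refl φ.symm)
  left_inv u := by
    ext x
    by_cases hx : x ∈ Ioo ⊥ ⊤
    · simp [Equiv.Perm.subtypeCongr.left_apply _ _ hx]
    · rcases notMem_Ioo_bot_top.1 hx with rfl | rfl <;> simp
  right_inv φ := by
    ext x
    simp
  map_mul' u v := rfl

lemma autIooBotTopEquiv_apply_lt {u : α ≃o α} (hu : ∀ x ∈ Ioo ⊥ ⊤, u x < x)
    (x : Ioo (⊥ : α) ⊤) : autIooBotTopEquiv u x < x :=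
  hu x x.2

end Interior

end OrderIso

theorem Real.isConj_of_forall_apply_lt {a b : ℝ ≃o ℝ} (ha : ∀ x, a x < x) (hb : ∀ x, b x < x) :
    IsConj a b :=
  -- `t ↦ (b 0 / a 0) * t` maps the fundamental domain `[a 0, 0)` of `a` onto that of `b`.
  OrderIso.isConj_of_orbitsUnboundedBelow (OrderIso.orbitsUnboundedBelow_of_apply_lt ha)
    (OrderIso.orbitsUnboundedBelow_of_apply_lt hb)
    (OrderIso.mulLeft₀ (b 0 / a 0) (div_pos_of_neg_of_neg (hb 0) (ha 0))) 0
    (by simp [div_mul_cancel₀ _ (ha 0).ne])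

namespace unitInterval

@[simp] lemma orderIso_apply_zero (u : I ≃o I) : u 0 = 0 := u.map_bot

@[simp] lemma orderIso_apply_one (u : I ≃o I) : u 1 = 1 := u.map_top

noncomputable def sigmoidOrderIso : ℝ ≃o Ioo (⊥ : I) ⊤ :=
  (sigmoid_strictMono.orderIso _).trans (OrderIso.setCongr _ _ range_sigmoid)

noncomputable def autEquivReal : (I ≃o I) ≃* (ℝ ≃o ℝ) :=
  OrderIso.autIooBotTopEquiv.trans sigmoidOrderIso.symm.autCongr

lemma isConj_of_apply_lt {u v : I ≃o I} (hu : ∀ x ∈ Ioo 0 1, u x < x)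
    (hv : ∀ x ∈ Ioo 0 1, v x < x) : IsConj u v := by
  have hreal : IsConj (autEquivReal u) (autEquivReal v) := Real.isConj_of_forall_apply_lt
    (sigmoidOrderIso.symm.autCongr_apply_lt (OrderIso.autIooBotTopEquiv_apply_lt hu))
    (sigmoidOrderIso.symm.autCongr_apply_lt (OrderIso.autIooBotTopEquiv_apply_lt hv))
  simpa only [MulEquiv.coe_toMonoidHom, MulEquiv.symm_apply_apply] using
    autEquivReal.symm.toMonoidHom.map_isConj hreal

noncomputable def mulOrderIso (u v : I ≃o I) : I ≃o I :=
  StrictMono.orderIsoOfSurjective (fun x => u x * v x)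
    (fun x y hxy => Subtype.coe_lt_coe.1 <|
      mul_lt_mul'' (u.strictMono hxy) (v.strictMono hxy) (nonneg _) (nonneg _))
    (by
      have hcont : Continuous fun x => u x * v x := by fun_prop
      intro y
      have hIcc := intermediate_value_univ 0 1 hcont
      simp only [orderIso_apply_zero, orderIso_apply_one, zero_mul, one_mul] at hIcc
      exact hIcc ⟨nonneg', le_one'⟩)

theorem exists_commutator_eq (h : I ≃o I) : ∃ φ g : I ≃o I, φ * g * φ⁻¹ * g⁻¹ = h := by
  let g := mulOrderIso (OrderIso.refl I) h.symm
  have hg : ∀ x ∈ Ioo 0 1, g x < x := fun x hx =>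
    mul_lt_of_lt_one_right hx.1 (by simpa using h.symm.strictMono hx.2)
  have hf : ∀ x ∈ Ioo 0 1, (h * g) x < x := fun x hx =>
    calc h (g x) < h (h.symm x) :=
          h.strictMono (mul_lt_of_lt_one_left (by simpa using h.symm.strictMono hx.1) hx.2)
      _ = x := h.apply_symm_apply x
  obtain ⟨φ, hφ⟩ := isConj_iff.1 (isConj_of_apply_lt hg hf)
  exact ⟨φ, g, by rw [hφ, mul_inv_cancel_right]⟩

end unitInterval

/-- every orientation-preserving homeomorphism of `[0,1]` is a single
commutator `g₁ g₂ g₁⁻¹ g₂⁻¹` of orientation-preserving homeomorphisms of `[0,1]`. -/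
theorem orientation_preserving_homeo_is_commutator
    (h : Homeomorph (Icc (0:ℝ) 1) (Icc (0:ℝ) 1)) (hh : OrientationPreserving h) :
    ∃ g₁ g₂ : Homeomorph (Icc (0:ℝ) 1) (Icc (0:ℝ) 1),
      OrientationPreserving g₁ ∧ OrientationPreserving g₂ ∧
      ∀ x, h x = g₁ (g₂ (g₁.symm (g₂.symm x))) := by
  have hmono : StrictMono h :=
    h.continuous.strictMono_of_inj_boundedOrder (by rw [show h ⊥ = ⊥ from hh.1]; exact bot_le)
      h.injective
  obtain ⟨φ, g, hφg⟩ :=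
    unitInterval.exists_commutator_eq (hmono.orderIsoOfSurjective h h.surjective)
  exact ⟨φ.toHomeomorph, g.toHomeomorph, ⟨φ.map_bot, φ.map_top⟩, ⟨g.map_bot, g.map_top⟩,
    fun x => (DFunLike.congr_fun hφg x).symm⟩
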